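/- Let R_0 ∈ ℝ^m, let Δ_0, …, Δ_t ∈ ℝ^n, and set R_{t+1} := R_0 + B ∑_{τ=0}^{t} Δ_τ. Then for every state i, −max_{j ∈ U_i} R_{t+1}^j ≤ (1 + γ) ‖V*_{R_0} − ∑_{τ=0}^{t} Δ_τ‖_∞. In particular, if ‖V*_{R_0} − ∑_{τ=0}^{t} Δ_τ‖_∞ ≤ α^{t+1} ‖V*_{R_0}‖_∞ for some α ∈ [0,1), then the stage costs c_{t+1} := −∑_{i=1}^{n} max_{j ∈ U_i} R_{t+1}^j are geometrically bounded and ∑_{t} c_t < ∞. -/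

import Mathlib

open Matrix MeasureTheory Filter Topology

noncomputable section

/-- The policy matrix `Π` of a deterministic policy `π`. -/
def polMat {n m : ℕ} (π : Fin n → Fin m) : Matrix (Fin n) (Fin m) ℝ :=
  Matrix.of fun i j => if j = π i then 1 else 0

/-- The matrix `S` with `S^j_i = 1` iff `s j = i`. -/
def projMat {n m : ℕ} (s : Fin m → Fin n) : Matrix (Fin m) (Fin n) ℝ :=
  Matrix.of fun j i => if s j = i then 1 else 0

/-- A row-stochastic matrix: nonnegative entries, rows summing to one. -/
def RowStochastic {n m : ℕ} (F : Matrix (Fin m) (Fin n) ℝ) : Prop :=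
  (∀ j i, 0 ≤ F j i) ∧ ∀ j, ∑ i, F j i = 1

/-- A deterministic policy: a section of the state projection `s`. -/
def IsPolicy {n m : ℕ} (s : Fin m → Fin n) (π : Fin n → Fin m) : Prop :=
  ∀ i, s (π i) = i

/-- The value vector `V_{π,R} = (I − γΠF)⁻¹ Π R`. -/
def valueVec {n m : ℕ} (γ : ℝ) (F : Matrix (Fin m) (Fin n) ℝ)
    (π : Fin n → Fin m) (R : Fin m → ℝ) : Fin n → ℝ :=
  ((1 : Matrix (Fin n) (Fin n) ℝ) - γ • (polMat π * F))⁻¹ *ᵥ (polMat π *ᵥ R)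

/-- A policy is optimal for `R` when its value vector dominates all others componentwise. -/
def IsOptimal {n m : ℕ} (s : Fin m → Fin n) (γ : ℝ) (F : Matrix (Fin m) (Fin n) ℝ)
    (R : Fin m → ℝ) (π : Fin n → Fin m) : Prop :=
  IsPolicy s π ∧ ∀ π', IsPolicy s π' → ∀ i, valueVec γ F π' R i ≤ valueVec γ F π R i

/-- `hmax R i = max_{j ∈ U_i} R j`. -/
def hmax {n m : ℕ} (s : Fin m → Fin n) (R : Fin m → ℝ) (i : Fin n) : ℝ :=
  sSup {x | ∃ j, s j = i ∧ R j = x}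


/-! The optimal value `V = V*_{R₀}` solves the Bellman equation: the action chosen by the optimal
policy at a state attains `V` there and every other action at that state does no better. Writing
`E = V − W`, the residual reward `R₀ + BW` at an action `j` splits as the Bellman gap of `j`
(zero for the optimal action, nonpositive for every action) plus `E (s j) − γ (F E) j`, whose
absolute value is at most `(1 + γ)‖E‖_∞` because `F` is an averaging operator. Hence
`|max_{j ∈ U_i} (R₀ + BW) j| ≤ (1 + γ)‖E‖_∞`, and geometric decay of `‖E‖_∞` makes the stage
costs summable. -/

namespace RowStochastic

variable {n m : ℕ} {F : Matrix (Fin m) (Fin n) ℝ}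

lemma mulVec_apply_le (hF : RowStochastic F) {x : Fin n → ℝ} {c : ℝ} (h : ∀ k, x k ≤ c)
    (j : Fin m) : (F *ᵥ x) j ≤ c :=
  calc (F *ᵥ x) j = ∑ k, F j k * x k := rfl
    _ ≤ ∑ k, F j k * c :=
      Finset.sum_le_sum fun k _ => mul_le_mul_of_nonneg_left (h k) (hF.1 j k)
    _ = c := by rw [← Finset.sum_mul, hF.2 j, one_mul]

lemma le_mulVec_apply (hF : RowStochastic F) {x : Fin n → ℝ} {c : ℝ} (h : ∀ k, c ≤ x k)
    (j : Fin m) : c ≤ (F *ᵥ x) j := by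
  simpa [Matrix.mulVec_neg] using
    hF.mulVec_apply_le (x := -x) (c := -c) (fun k => neg_le_neg (h k)) j

lemma norm_mulVec_le (hF : RowStochastic F) (x : Fin n → ℝ) : ‖F *ᵥ x‖ ≤ ‖x‖ := by
  have hx : ∀ k, |x k| ≤ ‖x‖ := fun k => norm_le_pi_norm x k
  refine (pi_norm_le_iff_of_nonneg (norm_nonneg x)).2 fun j => abs_le.2 ⟨?_, ?_⟩
  · exact hF.le_mulVec_apply (fun k => (abs_le.1 (hx k)).1) j
  · exact hF.mulVec_apply_le (fun k => (abs_le.1 (hx k)).2) j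

lemma submatrix (hF : RowStochastic F) {k : ℕ} (π : Fin k → Fin m) :
    RowStochastic (F.submatrix π id) :=
  ⟨fun i l => hF.1 (π i) l, fun i => hF.2 (π i)⟩

variable {γ : ℝ} {A : Matrix (Fin n) (Fin n) ℝ}

lemma det_one_sub_smul_ne_zero (hA : RowStochastic A) (hγ0 : 0 ≤ γ) (hγ1 : γ < 1) :
    (1 - γ • A).det ≠ 0 := by
  rw [Ne, ← Matrix.exists_mulVec_eq_zero_iff]
  rintro ⟨v, hv, hAv⟩
  have hfix : v = γ • (A *ᵥ v) := by
    rwa [Matrix.sub_mulVec, Matrix.one_mulVec, Matrix.smul_mulVec, sub_eq_zero] at hAv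
  have hcontr : ‖v‖ ≤ γ * ‖v‖ :=
    calc ‖v‖ = γ * ‖A *ᵥ v‖ := by
          conv_lhs => rw [hfix]
          rw [norm_smul, Real.norm_of_nonneg hγ0]
      _ ≤ γ * ‖v‖ := mul_le_mul_of_nonneg_left (hA.norm_mulVec_le v) hγ0
  exact hv (norm_le_zero_iff.1 (by nlinarith [norm_nonneg v]))

/-- At a minimiser `k` of `u` the identity gives `u k ≥ γ u k`, so `u ≥ u k ≥ 0`. -/
lemma le_of_eq_add_smul_mulVec (hA : RowStochastic A) (hγ0 : 0 ≤ γ) (hγ1 : γ < 1)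
    {u e : Fin n → ℝ} (hu : u = e + γ • (A *ᵥ u)) (he : 0 ≤ e) : e ≤ u := by
  intro i
  obtain ⟨k, -, hk⟩ := Finset.exists_min_image Finset.univ u ⟨i, Finset.mem_univ i⟩
  have hAu : ∀ j, u k ≤ (A *ᵥ u) j := hA.le_mulVec_apply fun l => hk l (Finset.mem_univ l)
  have hu_apply : ∀ j, u j = e j + γ * (A *ᵥ u) j := fun j => congrFun hu j
  have he_apply : ∀ j, 0 ≤ e j := he
  have hk_nonneg : 0 ≤ u k := by
    by_contra! hneg
    nlinarith [hu_apply k, he_apply k, mul_nonneg hγ0 (sub_nonneg.2 (hAu k)),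
      mul_pos (sub_pos.2 hγ1) (neg_pos.2 hneg)]
  nlinarith [hu_apply i, he_apply i, mul_nonneg hγ0 (hk_nonneg.trans (hAu i))]

end RowStochastic

section ValueVector

variable {n m : ℕ} {γ : ℝ} {F : Matrix (Fin m) (Fin n) ℝ}

lemma polMat_mul (π : Fin n → Fin m) (F : Matrix (Fin m) (Fin n) ℝ) :
    polMat π * F = F.submatrix π id := by
  ext i k
  simp [polMat, Matrix.mul_apply]

lemma polMat_mulVec (π : Fin n → Fin m) (R : Fin m → ℝ) : polMat π *ᵥ R = R ∘ π := by
  ext i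
  simp [polMat, Matrix.mulVec, dotProduct]

lemma projMat_mulVec (s : Fin m → Fin n) (W : Fin n → ℝ) : projMat s *ᵥ W = W ∘ s := by
  ext j
  simp [projMat, Matrix.mulVec, dotProduct]

lemma valueVec_apply (hγ0 : 0 ≤ γ) (hγ1 : γ < 1) (hF : RowStochastic F) (π : Fin n → Fin m)
    (R : Fin m → ℝ) (i : Fin n) :
    valueVec γ F π R i = R (π i) + γ * (F *ᵥ valueVec γ F π R) (π i) := by
  set M : Matrix (Fin n) (Fin n) ℝ := 1 - γ • (polMat π * F)
  have hdet : IsUnit M.det := isUnit_iff_ne_zero.2 <| by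
    simpa only [M, polMat_mul] using (hF.submatrix π).det_one_sub_smul_ne_zero hγ0 hγ1
  have hMV : M *ᵥ valueVec γ F π R = polMat π *ᵥ R := by
    rw [valueVec, Matrix.mulVec_mulVec, Matrix.mul_nonsing_inv M hdet, Matrix.one_mulVec]
  have := congrFun hMV i
  simp only [M, Matrix.sub_mulVec, Matrix.one_mulVec, Matrix.smul_mulVec,
    ← Matrix.mulVec_mulVec, polMat_mulVec, Pi.sub_apply, Pi.smul_apply, Function.comp_apply,
    smul_eq_mul] at this
  linarith

/-- Switching the optimal policy to `j` at the single state `s j` changes its value by the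
solution `u` of `u = e + γ Π'F u`, where `e` is the Bellman gap of `j` at `s j` and vanishes
elsewhere; a positive gap would make the switched policy strictly better at `s j`. -/
lemma IsOptimal.add_smul_mulVec_le {s : Fin m → Fin n} {R : Fin m → ℝ} {π : Fin n → Fin m}
    (hγ0 : 0 ≤ γ) (hγ1 : γ < 1) (hF : RowStochastic F) (hπ : IsOptimal s γ F R π)
    (j : Fin m) : R j + γ * (F *ᵥ valueVec γ F π R) j ≤ valueVec γ F π R (s j) := by
  set V := valueVec γ F π R
  set π' := Function.update π (s j) j
  have hπ' : IsPolicy s π' := fun i => by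
    by_cases hi : i = s j
    · subst hi; simp [π']
    · simp [π', hi, hπ.1 i]
  set V' := valueVec γ F π' R
  set e : Fin n → ℝ := fun i => R (π' i) + γ * (F *ᵥ V) (π' i) - V i
  by_contra! hgap
  have he : 0 ≤ e := fun i => by
    by_cases hi : i = s j
    · subst hi
      simp only [Pi.zero_apply, Function.update_self, sub_nonneg, e, π']
      exact hgap.le
    · simp [e, π', hi, ← valueVec_apply hγ0 hγ1 hF π R i, V]
  have hu : V' - V = e + γ • ((polMat π' * F) *ᵥ (V' - V)) := by
    ext i
    simp only [Pi.sub_apply, Pi.add_apply, Pi.smul_apply, smul_eq_mul, e,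
      ← Matrix.mulVec_mulVec, polMat_mulVec, Function.comp_apply, Matrix.mulVec_sub]
    rw [show V' i = _ from valueVec_apply hγ0 hγ1 hF π' R i]
    ring
  have himprove : e (s j) ≤ V' (s j) - V (s j) :=
    (polMat_mul π' F ▸ hF.submatrix π').le_of_eq_add_smul_mulVec hγ0 hγ1 hu he (s j)
  have hopt : V' (s j) ≤ V (s j) := hπ.2 π' hπ' (s j)
  simp only [e, π', Function.update_self] at himprove
  linarith

end ValueVector

section Residual

variable {n m : ℕ} {s : Fin m → Fin n} {γ : ℝ} {F : Matrix (Fin m) (Fin n) ℝ}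

lemma le_hmax (R : Fin m → ℝ) {i : Fin n} {j : Fin m} (hj : s j = i) : R j ≤ hmax s R i :=
  le_csSup ((Set.finite_range R).subset <| by rintro _ ⟨k, -, rfl⟩; exact ⟨k, rfl⟩).bddAbove
    ⟨j, hj, rfl⟩

lemma hmax_le {R : Fin m → ℝ} {i : Fin n} {c : ℝ} (hi : ∃ j, s j = i)
    (h : ∀ j, s j = i → R j ≤ c) : hmax s R i ≤ c :=
  let ⟨j, hj⟩ := hi
  csSup_le ⟨R j, j, hj, rfl⟩ <| by rintro _ ⟨k, hk, rfl⟩; exact h k hk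

lemma residual_apply (R : Fin m → ℝ) (V W : Fin n → ℝ) (j : Fin m) :
    (R + (γ • F - projMat s) *ᵥ W) j =
      (R j + γ * (F *ᵥ V) j - V (s j)) + ((V - W) (s j) - γ * (F *ᵥ (V - W)) j) := by
  simp only [Pi.add_apply, Matrix.sub_mulVec, Matrix.smul_mulVec, projMat_mulVec,
    Matrix.mulVec_sub, Pi.sub_apply, Pi.smul_apply, smul_eq_mul, Function.comp_apply]
  ring

lemma abs_sub_smul_mulVec_apply_le (hγ0 : 0 ≤ γ) (hF : RowStochastic F) (E : Fin n → ℝ)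
    (k : Fin n) (j : Fin m) : |E k - γ * (F *ᵥ E) j| ≤ (1 + γ) * ‖E‖ :=
  calc |E k - γ * (F *ᵥ E) j| ≤ |E k| + γ * |(F *ᵥ E) j| :=
        (abs_sub _ _).trans_eq (by rw [abs_mul, abs_of_nonneg hγ0])
    _ ≤ ‖E‖ + γ * ‖E‖ := by
        gcongr
        · exact norm_le_pi_norm E k
        · exact (norm_le_pi_norm (F *ᵥ E) j).trans (hF.norm_mulVec_le E)
    _ = (1 + γ) * ‖E‖ := by ring

lemma abs_hmax_residual_le {R : Fin m → ℝ} {π : Fin n → Fin m} (hγ0 : 0 ≤ γ) (hγ1 : γ < 1)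
    (hF : RowStochastic F) (hπ : IsOptimal s γ F R π) (W : Fin n → ℝ) (i : Fin n) :
    |hmax s (R + (γ • F - projMat s) *ᵥ W) i| ≤ (1 + γ) * ‖valueVec γ F π R - W‖ := by
  set V := valueVec γ F π R
  have herr := fun k j => abs_le.1 (abs_sub_smul_mulVec_apply_le hγ0 hF (V - W) k j)
  refine abs_le.2 ⟨?_, hmax_le ⟨π i, hπ.1 i⟩ fun j hj => ?_⟩
  · have hV : V i = R (π i) + γ * (F *ᵥ V) (π i) := valueVec_apply hγ0 hγ1 hF π R i
    calc -((1 + γ) * ‖V - W‖) ≤ (V - W) i - γ * (F *ᵥ (V - W)) (π i) := (herr i (π i)).1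
      _ = (R + (γ • F - projMat s) *ᵥ W) (π i) := by rw [residual_apply R V, hπ.1 i]; linarith
      _ ≤ hmax s (R + (γ • F - projMat s) *ᵥ W) i := le_hmax _ (hπ.1 i)
  · have hgap := hπ.add_smul_mulVec_le hγ0 hγ1 hF j
    rw [hj] at hgap
    rw [residual_apply R V, hj]
    linarith [(herr i j).2]

end Residual

theorem stage_cost_geometric_bound_general {n m : ℕ}
    (s : Fin m → Fin n)
    (γ : ℝ) (hγ0 : 0 ≤ γ) (hγ1 : γ < 1)
    (F : Matrix (Fin m) (Fin n) ℝ) (hF : RowStochastic F)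
    (R0 : Fin m → ℝ) (πs : Fin n → Fin m) (hπs : IsOptimal s γ F R0 πs) :
    (∀ (t : ℕ) (Δ : ℕ → Fin n → ℝ) (i : Fin n),
        -hmax s (R0 + (γ • F - projMat s) *ᵥ ∑ τ ∈ Finset.range (t + 1), Δ τ) i ≤
          (1 + γ) * ‖valueVec γ F πs R0 - ∑ τ ∈ Finset.range (t + 1), Δ τ‖) ∧
      ∀ (Δ : ℕ → Fin n → ℝ) (α : ℝ), 0 ≤ α → α < 1 →
        (∀ t : ℕ, ‖valueVec γ F πs R0 - ∑ τ ∈ Finset.range (t + 1), Δ τ‖ ≤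
            α ^ (t + 1) * ‖valueVec γ F πs R0‖) →
        Summable (fun t : ℕ =>
          -∑ i, hmax s (R0 + (γ • F - projMat s) *ᵥ ∑ τ ∈ Finset.range (t + 1), Δ τ) i) := by
  have hres := abs_hmax_residual_le hγ0 hγ1 hF hπs
  refine ⟨fun t Δ i => (neg_le_abs _).trans (hres _ i), fun Δ α hα0 hα1 hgeo => ?_⟩
  set V := valueVec γ F πs R0
  have hgeom := (summable_geometric_of_lt_one hα0 hα1).mul_left (n * ((1 + γ) * α * ‖V‖))
  refine hgeom.of_norm_bounded fun t => ?_
  rw [Real.norm_eq_abs, abs_neg]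
  refine (Finset.abs_sum_le_sum_abs _ _).trans <| (Finset.sum_le_sum fun i _ =>
    (hres _ i).trans (mul_le_mul_of_nonneg_left (hgeo t) ?_)).trans_eq ?_
  · linarith
  · simp only [Finset.sum_const, Finset.card_univ, Fintype.card_fin, nsmul_eq_mul, pow_succ]
    ring

/-- Stage-cost bound: for `R_{t+1} = R₀ + B ∑_{τ≤t} Δ_τ`, each
`−max_{j ∈ U_i} R_{t+1}^j` is bounded by `(1+γ)‖V*_{R₀} − ∑_{τ≤t} Δ_τ‖_∞`; consequently, if
the input partial sums approach `V*_{R₀}` geometrically, the stage costs are summable. -/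
theorem stage_cost_geometric_bound {n m : ℕ} (hn : 1 ≤ n) (hm : 1 ≤ m)
    (s : Fin m → Fin n) (hs : Function.Surjective s)
    (γ : ℝ) (hγ0 : 0 ≤ γ) (hγ1 : γ < 1)
    (F : Matrix (Fin m) (Fin n) ℝ) (hF : RowStochastic F)
    (R0 : Fin m → ℝ) (πs : Fin n → Fin m) (hπs : IsOptimal s γ F R0 πs) :
    (∀ (t : ℕ) (Δ : ℕ → Fin n → ℝ) (i : Fin n),
        -hmax s (R0 + (γ • F - projMat s) *ᵥ ∑ τ ∈ Finset.range (t + 1), Δ τ) i ≤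
          (1 + γ) * ‖valueVec γ F πs R0 - ∑ τ ∈ Finset.range (t + 1), Δ τ‖) ∧
      ∀ (Δ : ℕ → Fin n → ℝ) (α : ℝ), 0 ≤ α → α < 1 →
        (∀ t : ℕ, ‖valueVec γ F πs R0 - ∑ τ ∈ Finset.range (t + 1), Δ τ‖ ≤
            α ^ (t + 1) * ‖valueVec γ F πs R0‖) →
        Summable (fun t : ℕ =>
          -∑ i, hmax s (R0 + (γ • F - projMat s) *ᵥ ∑ τ ∈ Finset.range (t + 1), Δ τ) i) :=
  stage_cost_geometric_bound_general s γ hγ0 hγ1 F hF R0 πs hπs
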